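/- Fix λ > 0 and let δ ∈ (0,1) with α = (1-δ)², m = 1 + α(λ-1) > 0. Define N(δ) = 1 + (1-δ)(λ - 1) - √λ √m. Then N(δ) = -((λ-1)/(2λ)) δ² + o(δ²) as δ → 0⁺. -/
import Mathlib


open Asymptotics

/-- For `λ > 0`, `α = (1-δ)²`, `m = 1 + α(λ-1)`, the quantity
`N(δ) = 1 + (1-δ)(λ-1) - √λ √m` satisfies
`N(δ) = -((λ-1)/(2λ)) δ² + o(δ²)` as `δ → 0⁺`. -/
theorem stmt8 (lam : ℝ) (hlam : 0 < lam) (N : ℝ → ℝ)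
    (hN : ∀ δ : ℝ, N δ = 1 + (1 - δ) * (lam - 1)
        - Real.sqrt lam * Real.sqrt (1 + (1 - δ) ^ 2 * (lam - 1))) :
    (fun δ : ℝ => N δ - (-((lam - 1) / (2 * lam)) * δ ^ 2))
      =o[nhdsWithin 0 (Set.Ioi 0)] (fun δ : ℝ => δ ^ 2) := by
  set c := (lam - 1) / (2 * lam) with hc
  set l := nhdsWithin (0:ℝ) (Set.Ioi 0) with hl
  set M : ℝ → ℝ := fun δ => 1 + (1 - δ) ^ 2 * (lam - 1) with hM
  set D : ℝ → ℝ := fun δ => (lam - δ * (lam - 1)) + Real.sqrt lam * Real.sqrt (M δ)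
    with hD
  -- M tends to lam
  have hMcont : Filter.Tendsto M (nhds 0) (nhds lam) := by
    have h1 : Continuous M := by fun_prop
    have := h1.tendsto 0
    simpa [hM] using this
  -- D tends to 2*lam
  have hDcont : Filter.Tendsto D (nhds 0) (nhds (2 * lam)) := by
    have h1 : Continuous D := by
      apply Continuous.add (by fun_prop)
      exact continuous_const.mul (Real.continuous_sqrt.comp (by fun_prop))
    have := h1.tendsto 0
    have hval : D 0 = 2 * lam := by
      simp only [hD, hM]
      rw [show (1 : ℝ) + (1 - 0) ^ 2 * (lam - 1) = lam by ring,
        Real.mul_self_sqrt hlam.le]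
      ring
    rwa [hval] at this
  -- eventually M > 0 and D > 0
  have hMpos : ∀ᶠ δ in l, 0 < M δ :=
    (hMcont.mono_left nhdsWithin_le_nhds).eventually (eventually_gt_nhds hlam)
  have hDpos : ∀ᶠ δ in l, 0 < D δ :=
    (hDcont.mono_left nhdsWithin_le_nhds).eventually
      (eventually_gt_nhds (by linarith))
  -- key algebraic identity
  have key : ∀ δ : ℝ, 0 < M δ → 0 < D δ →
      N δ - (-c * δ ^ 2) = δ ^ 2 * (c - (lam - 1) / D δ) := by
    intro δ hm hd
    have hs2 : Real.sqrt (M δ) ^ 2 = M δ := Real.sq_sqrt hm.le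
    have hl2 : Real.sqrt lam ^ 2 = lam := Real.sq_sqrt hlam.le
    have hDne : D δ ≠ 0 := ne_of_gt hd
    have hmain : 1 + (1 - δ) * (lam - 1) - Real.sqrt lam * Real.sqrt (M δ)
        = -δ ^ 2 * (lam - 1) / D δ := by
      rw [eq_div_iff hDne]
      simp only [hD, hM]
      simp only [hM] at hs2
      linear_combination (-(Real.sqrt lam ^ 2)) * hs2
        - (1 + (1 - δ) ^ 2 * (lam - 1)) * hl2
    rw [hN δ]
    simp only [hM] at hmain
    rw [hmain]
    field_simp
    ring
  -- eventual equality with δ^2 * h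
  have heq : (fun δ : ℝ => N δ - (-c * δ ^ 2))
      =ᶠ[l] fun δ => δ ^ 2 * (c - (lam - 1) / D δ) := by
    filter_upwards [hMpos, hDpos] with δ hm hd using key δ hm hd
  -- h tends to 0
  have hh : Filter.Tendsto (fun δ => c - (lam - 1) / D δ) l (nhds 0) := by
    have h2 : Filter.Tendsto (fun δ => (lam - 1) / D δ) l (nhds ((lam - 1) / (2 * lam))) :=
      Filter.Tendsto.div tendsto_const_nhds (hDcont.mono_left nhdsWithin_le_nhds)
        (by positivity)
    have := (tendsto_const_nhds (x := c) (f := l)).sub h2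
    simpa [hc] using this
  have hlo : (fun δ : ℝ => δ ^ 2 * (c - (lam - 1) / D δ)) =o[l] fun δ : ℝ => δ ^ 2 := by
    have := (isBigO_refl (fun δ : ℝ => δ ^ 2) l).mul_isLittleO
      ((isLittleO_one_iff ℝ).mpr hh)
    simpa using this
  exact heq.trans_isLittleO hlo
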